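/- arXiv:2406.02981 — 5 statements merged into one kernel-verified Lean document; each statement's English description precedes it below -/
import Mathlib

section
/- Let f : {0,1}^n → {0,1} be a Boolean function and x ∈ {0,1}^n. A feature i ∈ {1,…,n} is locally necessary for (f,x) if and only if f(x⁽ⁱ⁾) ≠ f(x), where x⁽ⁱ⁾ denotes x with its i-th coordinate negated and all other coordinates unchanged. -/
/-- `comb S x z` is the input that equals `x` on coordinates in `S` and `z` outside `S`. -/
def comb {n : ℕ} (S : Finset (Fin n)) (x z : Fin n → Bool) : Fin n → Bool :=
  fun i => if i ∈ S then x i else z i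

/-- `S` is a local sufficient reason for `(f, x)`. -/
def LocalSuff {n : ℕ} (f : (Fin n → Bool) → Bool) (x : Fin n → Bool)
    (S : Finset (Fin n)) : Prop :=
  ∀ z : Fin n → Bool, f (comb S x z) = f x

/-- Feature `i` is locally necessary for `(f, x)`. -/
def LocallyNecessary {n : ℕ} (f : (Fin n → Bool) → Bool) (x : Fin n → Bool)
    (i : Fin n) : Prop :=
  ∀ S : Finset (Fin n), LocalSuff f x S → ¬ LocalSuff f x (S.erase i)

/-! Sufficiency is upward closed, so some sufficient reason loses sufficiency when `i` is removed
iff the largest one does: `i` is necessary iff `univ.erase i` is not sufficient. Since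
`comb (univ.erase i) x z` only differs from `x` at `i`, sufficiency of `univ.erase i` says
exactly that flipping `x i` does not change `f`. -/

open Finset

section Comb

variable {n : ℕ} (x : Fin n → Bool)

theorem comb_univ (z : Fin n → Bool) : comb univ x z = x := by
  funext j
  simp [comb]

theorem comb_comb_of_subset {S T : Finset (Fin n)} (hST : S ⊆ T) (z : Fin n → Bool) :
    comb S x (comb T x z) = comb T x z := by
  funext j
  by_cases hj : j ∈ S
  · simp [comb, hj, hST hj]
  · simp [comb, hj]

theorem comb_univ_erase (i : Fin n) (z : Fin n → Bool) :
    comb (univ.erase i) x z = Function.update x i (z i) := by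
  funext j
  by_cases hj : j = i
  · subst hj
    simp [comb]
  · simp [comb, hj]

end Comb

section LocalSuff

variable {n : ℕ} (f : (Fin n → Bool) → Bool) (x : Fin n → Bool)

theorem localSuff_univ : LocalSuff f x univ := fun z => by
  rw [comb_univ]

theorem LocalSuff.mono {f x} {S T : Finset (Fin n)} (hS : LocalSuff f x S) (hST : S ⊆ T) :
    LocalSuff f x T := fun z => by
  rw [← comb_comb_of_subset x hST z, hS]

theorem localSuff_univ_erase_iff (i : Fin n) :
    LocalSuff f x (univ.erase i) ↔ f (Function.update x i (!x i)) = f x := by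
  simp only [LocalSuff, comb_univ_erase]
  refine ⟨fun h => h fun _ => !x i, fun h z => ?_⟩
  rcases Bool.eq_or_eq_not (z i) (x i) with hz | hz
  · rw [hz, Function.update_eq_self]
  · rw [hz, h]

theorem locallyNecessary_iff_not_localSuff_univ_erase (i : Fin n) :
    LocallyNecessary f x i ↔ ¬ LocalSuff f x (univ.erase i) :=
  ⟨fun h => h univ (localSuff_univ f x),
    fun h _ _ hS => h (hS.mono (erase_subset_erase i (subset_univ _)))⟩

end LocalSuff

theorem necessity_iff_flip_changes {n : ℕ}
    (f : (Fin n → Bool) → Bool) (x : Fin n → Bool) (i : Fin n) :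
    LocallyNecessary f x i ↔ f (Function.update x i (! x i)) ≠ f x := by
  rw [locallyNecessary_iff_not_localSuff_univ_erase, localSuff_univ_erase_iff]
end

section
/- Let f : {0,1}^n → {0,1} be a Boolean function and let 𝒞 be the family of all subsets C ⊆ {1,…,n} such that C is a local contrastive reason for (f,x) for some x ∈ {0,1}^n. Then a subset S ⊆ {1,…,n} is a global sufficient reason for f if and only if S is a hitting set for 𝒞, i.e., S ∩ C ≠ ∅ for every C ∈ 𝒞. -/
/-- `S` is a global sufficient reason for `f`. -/
def GlobalSuff {n : ℕ} (f : (Fin n → Bool) → Bool) (S : Finset (Fin n)) : Prop :=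
  ∀ x z : Fin n → Bool, f (comb S x z) = f x

/-- `S` is a local contrastive reason for `(f, x)`: some change of the features
in `S` (keeping `x` outside `S`) changes the prediction. -/
def LocalContrastive {n : ℕ} (f : (Fin n → Bool) → Bool) (x : Fin n → Bool)
    (S : Finset (Fin n)) : Prop :=
  ∃ z : Fin n → Bool, f (comb S z x) ≠ f x

/-
A contrastive reason `C` for `(f, x)` that misses `S` yields the input `comb C z x`, which agrees
with `x` on `S` but not in value, so `S` is not globally sufficient. Conversely, `S` fails to be
globally sufficient exactly when its complement is a contrastive reason for some `x`, and `Sᶜ`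
does not meet `S`.
-/

section

variable {n : ℕ}

theorem comb_comb_of_disjoint {S C : Finset (Fin n)} (h : Disjoint S C) (x z : Fin n → Bool) :
    comb S x (comb C z x) = comb C z x := by
  funext i
  by_cases hS : i ∈ S
  · simp [comb, hS, Finset.disjoint_left.mp h hS]
  · simp [comb, hS]

theorem comb_compl (S : Finset (Fin n)) (x z : Fin n → Bool) : comb Sᶜ z x = comb S x z := by
  funext i
  by_cases hS : i ∈ S <;> simp [comb, hS]

theorem localContrastive_compl_iff {f : (Fin n → Bool) → Bool} {x : Fin n → Bool}
    {S : Finset (Fin n)} : LocalContrastive f x Sᶜ ↔ ∃ z, f (comb S x z) ≠ f x := by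
  simp only [LocalContrastive, comb_compl]

theorem globalSuff_iff_forall_not_localContrastive_compl {f : (Fin n → Bool) → Bool}
    {S : Finset (Fin n)} : GlobalSuff f S ↔ ∀ x, ¬ LocalContrastive f x Sᶜ := by
  simp [GlobalSuff, localContrastive_compl_iff]

theorem LocalContrastive.inter_nonempty_of_globalSuff {f : (Fin n → Bool) → Bool}
    {x : Fin n → Bool} {S C : Finset (Fin n)} (hS : GlobalSuff f S)
    (hC : LocalContrastive f x C) : (S ∩ C).Nonempty := by
  obtain ⟨z, hz⟩ := hC
  rw [Finset.nonempty_iff_ne_empty, ne_eq, ← Finset.disjoint_iff_inter_eq_empty]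
  intro hdisj
  exact hz (comb_comb_of_disjoint hdisj x z ▸ hS x (comb C z x))

end

theorem global_suff_iff_hitting_set_of_contrastives {n : ℕ}
    (f : (Fin n → Bool) → Bool) (S : Finset (Fin n)) :
    GlobalSuff f S ↔
      ∀ C : Finset (Fin n), (∃ x : Fin n → Bool, LocalContrastive f x C) →
        (S ∩ C).Nonempty := by
  refine ⟨fun hS C ⟨x, hC⟩ => hC.inter_nonempty_of_globalSuff hS, fun hHit => ?_⟩
  rw [globalSuff_iff_forall_not_localContrastive_compl]
  intro x hx
  simpa using hHit Sᶜ ⟨x, hx⟩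
end

section
/- For every Boolean function f : {0,1}^n → {0,1}, there exists exactly one subset-minimal global sufficient reason for f. -/
/-! Sufficient reasons are closed under intersection, so in the finite lattice of coordinate
sets the minimal one is unique: two minimal reasons both contain their (sufficient)
intersection, hence both equal it. -/

theorem existsUnique_minimal_of_inf_closed {α : Type*} [SemilatticeInf α] [WellFoundedLT α]
    {P : α → Prop} (hP : ∃ a, P a) (hinf : ∀ a b, P a → P b → P (a ⊓ b)) :
    ∃! a, Minimal P a := by
  obtain ⟨a, ha⟩ := exists_minimal_of_wellFoundedLT P hP
  refine ⟨a, ha, fun b hb => ?_⟩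
  have hab : P (a ⊓ b) := hinf a b ha.prop hb.prop
  calc b = a ⊓ b := (hb.eq_of_le hab inf_le_right).symm
    _ = a := ha.eq_of_le hab inf_le_left

theorem comb_comb_inter {n : ℕ} (S T : Finset (Fin n)) (x z : Fin n → Bool) :
    comb S (comb T x z) z = comb (S ∩ T) x z := by
  funext i
  by_cases hS : i ∈ S <;> by_cases hT : i ∈ T <;> simp [comb, hS, hT]

namespace GlobalSuff

variable {n : ℕ} {f : (Fin n → Bool) → Bool}

theorem univ (f : (Fin n → Bool) → Bool) : GlobalSuff f Finset.univ := by
  intro x z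
  congr 1
  funext i
  simp [comb]

theorem inter {S T : Finset (Fin n)} (hS : GlobalSuff f S) (hT : GlobalSuff f T) :
    GlobalSuff f (S ∩ T) := by
  intro x z
  calc f (comb (S ∩ T) x z) = f (comb S (comb T x z) z) := by rw [comb_comb_inter]
    _ = f (comb T x z) := hS _ _
    _ = f x := hT _ _

end GlobalSuff

theorem unique_subset_minimal_global_suff {n : ℕ}
    (f : (Fin n → Bool) → Bool) :
    ∃! S : Finset (Fin n),
      GlobalSuff f S ∧ ∀ T : Finset (Fin n), T ⊂ S → ¬ GlobalSuff f T := by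
  simpa only [minimal_iff_forall_lt] using
    existsUnique_minimal_of_inf_closed ⟨_, GlobalSuff.univ f⟩
      fun _ _ => GlobalSuff.inter
end

section
/- Let f : {0,1}^n → {0,1} be a Boolean function. A subset S ⊆ {1,…,n} is a global sufficient reason for f if and only if every feature i ∈ {1,…,n} \ S is globally redundant for f. -/
/-- Feature `i` is globally redundant for `f`. -/
def GloballyRedundant {n : ℕ} (f : (Fin n → Bool) → Bool) (i : Fin n) : Prop :=
  ∀ (x : Fin n → Bool) (S : Finset (Fin n)),
    LocalSuff f x S → LocalSuff f x (S.erase i)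

/-!
A global sufficient reason `S` makes `f` depend only on the coordinates in `S`, so changing a
local sufficient reason at a coordinate outside `S` cannot change the value of `f`. Conversely,
`univ` is a local sufficient reason at every `x`, and removing the features outside `S` one at a
time, each globally redundant, leaves `S` a local sufficient reason at every `x`.
-/

section comb

variable {n : ℕ} (x z : Fin n → Bool)

@[simp]
lemma comb_univ_s16 : comb Finset.univ x z = x := by
  funext i
  simp [comb]

lemma comb_erase_apply_of_ne (T : Finset (Fin n)) {i j : Fin n} (hji : j ≠ i) :
    comb (T.erase i) x z j = comb T x z j := by
  simp [comb, hji]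

end comb

section sufficiency

variable {n : ℕ} {f : (Fin n → Bool) → Bool}

lemma GlobalSuff.apply_eq_of_eqOn {S : Finset (Fin n)} (h : GlobalSuff f S)
    {a b : Fin n → Bool} (hab : ∀ i ∈ S, a i = b i) : f a = f b := by
  have hcomb : comb S a b = b := by
    funext i
    by_cases hi : i ∈ S <;> simp [comb, hi, hab]
  rw [← h a b, hcomb]

lemma localSuff_univ_s16 (x : Fin n → Bool) : LocalSuff f x Finset.univ := by
  simp [LocalSuff]

lemma GlobalSuff.globallyRedundant {S : Finset (Fin n)} (h : GlobalSuff f S) {i : Fin n}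
    (hi : i ∉ S) : GloballyRedundant f i := by
  intro x T hT z
  rw [← hT z]
  exact h.apply_eq_of_eqOn fun j hj => comb_erase_apply_of_ne x z T (ne_of_mem_of_not_mem hj hi)

lemma LocalSuff.sdiff {x : Fin n → Bool} {T : Finset (Fin n)} (hT : LocalSuff f x T)
    (A : Finset (Fin n)) (hA : ∀ i ∈ A, GloballyRedundant f i) : LocalSuff f x (T \ A) := by
  induction A using Finset.induction_on with
  | empty => simpa using hT
  | insert a A _ ih =>
    rw [Finset.sdiff_insert]
    exact hA a (Finset.mem_insert_self a A) x _ (ih fun i hi => hA i (Finset.mem_insert_of_mem hi))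

end sufficiency

theorem global_suff_iff_complement_redundant {n : ℕ}
    (f : (Fin n → Bool) → Bool) (S : Finset (Fin n)) :
    GlobalSuff f S ↔ ∀ i : Fin n, i ∉ S → GloballyRedundant f i := by
  refine ⟨fun h i hi => h.globallyRedundant hi, fun h x => ?_⟩
  have hS := (localSuff_univ_s16 (f := f) x).sdiff Sᶜ fun i hi => h i (Finset.mem_compl.mp hi)
  rwa [← Finset.compl_eq_univ_sdiff, compl_compl] at hS
end

section
/- Let w ∈ ℚⁿ, b ∈ ℚ, and let f : {0,1}^n → {0,1} be the Perceptron defined by f(y) = 1 if and only if ∑ᵢ wᵢ·yᵢ + b > 0 (where the binary coordinates yᵢ are interpreted as the rationals 0 and 1). For every S ⊆ {1,…,n}, S is a global sufficient reason for f if and only if for every x ∈ {0,1}^n, either ∑_{i∈S} wᵢ·xᵢ + ∑_{i∉S} max(wᵢ, 0) + b ≤ 0, or ∑_{i∈S} wᵢ·xᵢ + ∑_{i∉S} min(wᵢ, 0) + b > 0. -/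
/-- Interpret a binary coordinate as the rational `0` or `1`. -/
def bval (b : Bool) : ℚ := if b then 1 else 0

section BinaryWeights

variable {ι : Type*} (T : Finset ι) (w : ι → ℚ)

lemma mul_bval_le_max (a : ℚ) (c : Bool) : a * bval c ≤ max a 0 := by
  cases c <;> simp [bval]

lemma min_le_mul_bval (a : ℚ) (c : Bool) : min a 0 ≤ a * bval c := by
  cases c <;> simp [bval]

lemma mul_bval_decide_pos (a : ℚ) : a * bval (decide (0 < a)) = max a 0 := by
  by_cases ha : 0 < a
  · simp [bval, ha, ha.le]
  · simp [bval, ha, not_lt.mp ha]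

lemma mul_bval_decide_neg (a : ℚ) : a * bval (decide (a < 0)) = min a 0 := by
  by_cases ha : a < 0
  · simp [bval, ha, ha.le]
  · simp [bval, ha, not_lt.mp ha]

lemma sum_mul_bval_le_sum_max (z : ι → Bool) :
    ∑ i ∈ T, w i * bval (z i) ≤ ∑ i ∈ T, max (w i) 0 :=
  Finset.sum_le_sum fun i _ => mul_bval_le_max (w i) (z i)

lemma sum_min_le_sum_mul_bval (z : ι → Bool) :
    ∑ i ∈ T, min (w i) 0 ≤ ∑ i ∈ T, w i * bval (z i) :=
  Finset.sum_le_sum fun i _ => min_le_mul_bval (w i) (z i)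

lemma sum_mul_bval_decide_pos :
    ∑ i ∈ T, w i * bval (decide (0 < w i)) = ∑ i ∈ T, max (w i) 0 :=
  Finset.sum_congr rfl fun i _ => mul_bval_decide_pos (w i)

lemma sum_mul_bval_decide_neg :
    ∑ i ∈ T, w i * bval (decide (w i < 0)) = ∑ i ∈ T, min (w i) 0 :=
  Finset.sum_congr rfl fun i _ => mul_bval_decide_neg (w i)

end BinaryWeights

section Comb

variable {n : ℕ} (S : Finset (Fin n))

lemma comb_self (x : Fin n → Bool) : comb S x x = x := by
  funext i
  simp [comb]

lemma globalSuff_iff_forall_comb_const (f : (Fin n → Bool) → Bool) :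
    GlobalSuff f S ↔
      ∀ x, (∀ z, f (comb S x z) = false) ∨ ∀ z, f (comb S x z) = true := by
  constructor
  · intro h x
    cases hx : f x
    · exact Or.inl fun z => (h x z).trans hx
    · exact Or.inr fun z => (h x z).trans hx
  · intro h x z
    rcases h x with hfalse | htrue
    · rw [hfalse z, ← comb_self S x, hfalse x]
    · rw [htrue z, ← comb_self S x, htrue x]

lemma sum_mul_bval_comb (w : Fin n → ℚ) (x z : Fin n → Bool) :
    ∑ i, w i * bval (comb S x z i) =
      ∑ i ∈ S, w i * bval (x i) + ∑ i ∈ Sᶜ, w i * bval (z i) := by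
  rw [← Finset.sum_add_sum_compl S]
  congr 1
  · exact Finset.sum_congr rfl fun i hi => by simp [comb, hi]
  · exact Finset.sum_congr rfl fun i hi => by simp [comb, Finset.mem_compl.mp hi]

end Comb

section Perceptron

variable {n : ℕ} (w : Fin n → ℚ) (b : ℚ) (f : (Fin n → Bool) → Bool)

lemma perceptron_forall_comb_false_iff
    (hf : ∀ y : Fin n → Bool, f y = true ↔ 0 < (∑ i, w i * bval (y i)) + b)
    (S : Finset (Fin n)) (x : Fin n → Bool) :
    (∀ z, f (comb S x z) = false) ↔
      (∑ i ∈ S, w i * bval (x i)) + (∑ i ∈ Sᶜ, max (w i) 0) + b ≤ 0 := by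
  simp only [← Bool.not_eq_true, hf, sum_mul_bval_comb, not_lt]
  constructor
  · intro h
    simpa only [sum_mul_bval_decide_pos] using h fun i => decide (0 < w i)
  · intro h z
    linarith [sum_mul_bval_le_sum_max Sᶜ w z]

lemma perceptron_forall_comb_true_iff
    (hf : ∀ y : Fin n → Bool, f y = true ↔ 0 < (∑ i, w i * bval (y i)) + b)
    (S : Finset (Fin n)) (x : Fin n → Bool) :
    (∀ z, f (comb S x z) = true) ↔
      0 < (∑ i ∈ S, w i * bval (x i)) + (∑ i ∈ Sᶜ, min (w i) 0) + b := by
  simp only [hf, sum_mul_bval_comb]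
  constructor
  · intro h
    simpa only [sum_mul_bval_decide_neg] using h fun i => decide (w i < 0)
  · intro h z
    linarith [sum_min_le_sum_mul_bval Sᶜ w z]

end Perceptron

theorem perceptron_global_suff_iff {n : ℕ} (w : Fin n → ℚ) (b : ℚ)
    (f : (Fin n → Bool) → Bool)
    (hf : ∀ y : Fin n → Bool, f y = true ↔ 0 < (∑ i, w i * bval (y i)) + b)
    (S : Finset (Fin n)) :
    GlobalSuff f S ↔
      ∀ x : Fin n → Bool,
        ((∑ i ∈ S, w i * bval (x i)) + (∑ i ∈ Sᶜ, max (w i) 0) + b ≤ 0 ∨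
          0 < (∑ i ∈ S, w i * bval (x i)) + (∑ i ∈ Sᶜ, min (w i) 0) + b) := by
  rw [globalSuff_iff_forall_comb_const]
  exact forall_congr' fun x =>
    or_congr (perceptron_forall_comb_false_iff w b f hf S x)
      (perceptron_forall_comb_true_iff w b f hf S x)
end
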